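/- For all integers k ≥ 2 and m ≥ 2, the sum over all strictly increasing sequences 1 = i_1 < i_2 < ... < i_k = m of the product ∏_{j=1}^{k-1} (i_{j+1} - i_j) equals the binomial coefficient C(m+k-3, 2k-3). -/

import Mathlib

/-!
Splitting off the last element `m` of a chain `1 = i₁ < ⋯ < i_{k+1} = m`, the previous element
`i` contributes the factor `m - i`, so the sums `S_k(m)` satisfy
`S_{k+1}(m) = ∑_{1 ≤ i < m} S_k(i) (m - i)`. From `S_1(i) = [i = 1]` we get `S_2(m) = m - 1`, and
the closed form propagates through the convolution `∑_{j<n} C(j, a) (n - j) = C(n + 1, a + 2)`,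
which is the hockey-stick identity applied twice.
-/

open Finset

theorem Finset.sort_insert_of_forall_lt {α : Type*} [LinearOrder α] {s : Finset α} {b : α}
    (h : ∀ x ∈ s, x < b) : (insert b s).sort (· ≤ ·) = s.sort (· ≤ ·) ++ [b] := by
  have hb : b ∉ s := fun hb => lt_irrefl b (h b hb)
  refine List.Perm.eq_of_pairwise' (pairwise_sort _ _) ?_ ?_
  · exact List.pairwise_append.2 ⟨pairwise_sort _ _, List.pairwise_singleton _ _,
      fun x hx y hy => by
        rw [List.mem_singleton.1 hy]; exact (h x ((mem_sort _).1 hx)).le⟩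
  · refine (List.perm_ext_iff_of_nodup (sort_nodup _ _) ?_).2 fun x => ?_
    · exact List.nodup_append.2 ⟨sort_nodup _ _, List.nodup_singleton b,
        fun x hx y hy => by rintro rfl; exact hb (by simpa [List.mem_singleton.1 hy] using hx)⟩
    · simp [or_comm]

theorem Finset.getLast_sort {α : Type*} [LinearOrder α] {s : Finset α}
    (h : s.sort (· ≤ ·) ≠ []) :
    (s.sort (· ≤ ·)).getLast h = s.max' ⟨_, (mem_sort _).1 (List.getLast_mem h)⟩ :=
  (List.getLast_eq_getElem h).trans sorted_last_eq_max'

def gapProd (l : List ℕ) : ℕ :=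
  ∏ j ∈ range (l.length - 1), (l.getD (j + 1) 0 - l.getD j 0)

theorem gapProd_append_singleton {l : List ℕ} (hl : l ≠ []) (b : ℕ) :
    gapProd (l ++ [b]) = gapProd l * (b - l.getLast hl) := by
  obtain ⟨n, hn⟩ : ∃ n, l.length = n + 1 := Nat.exists_eq_succ_of_ne_zero (by simpa using hl)
  have hget : ∀ j ≤ n, (l ++ [b]).getD j 0 = l.getD j 0 := fun j hj =>
    List.getD_append _ _ _ _ (by omega)
  rw [gapProd, gapProd, List.length_append, hn, List.length_singleton, Nat.add_sub_cancel,
    Nat.add_sub_cancel, prod_range_succ]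
  congr 1
  · refine prod_congr rfl fun j hj => ?_
    have := mem_range.1 hj
    rw [hget j (by omega), hget (j + 1) (by omega)]
  · rw [hget n le_rfl, List.getD_append_right _ _ _ _ (by omega), hn, Nat.sub_self,
      List.getLast_eq_getElem]
    simp [hn]

def chains (k m : ℕ) : Finset (Finset ℕ) :=
  ((Icc 1 m).powersetCard k).filter (fun s => 1 ∈ s ∧ m ∈ s)

def chainGapSum (k m : ℕ) : ℕ :=
  ∑ s ∈ chains k m, gapProd (s.sort (· ≤ ·))

section Chains

variable {k i m : ℕ} {s t : Finset ℕ}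

theorem mem_chains :
    s ∈ chains k m ↔ s ⊆ Icc 1 m ∧ #s = k ∧ 1 ∈ s ∧ m ∈ s := by
  simp only [chains, mem_filter, mem_powersetCard, and_assoc]

theorem le_of_mem_chains (hs : s ∈ chains k m) {x : ℕ} (hx : x ∈ s) : x ≤ m :=
  (mem_Icc.1 ((mem_chains.1 hs).1 hx)).2

theorem insert_mem_chains (ht : t ∈ chains k i) (him : i < m) :
    insert m t ∈ chains (k + 1) m := by
  obtain ⟨hsub, hcard, h1, -⟩ := mem_chains.1 ht
  have hlt : ∀ x ∈ t, x < m := fun x hx => (le_of_mem_chains ht hx).trans_lt him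
  refine mem_chains.2 ⟨insert_subset (mem_Icc.2 ⟨by omega, le_rfl⟩) fun x hx => ?_,
    by rw [card_insert_of_notMem fun h => lt_irrefl m (hlt m h), hcard],
    mem_insert_of_mem h1, mem_insert_self m t⟩
  exact mem_Icc.2 ⟨(mem_Icc.1 (hsub hx)).1, (hlt x hx).le⟩

theorem sup_id_eq_of_mem_chains (hs : s ∈ chains k m) : s.sup id = m :=
  le_antisymm (Finset.sup_le fun _ hx => le_of_mem_chains hs hx)
    (le_sup (f := id) (mem_chains.1 hs).2.2.2)

-- `sup id` rather than `max'`, so that the inverse of `insert m` in `chainGapSum_succ` is total.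
theorem erase_mem_chains (hk : 1 ≤ k) (hs : s ∈ chains (k + 1) m) :
    (s.erase m).sup id ∈ Ico 1 m ∧ s.erase m ∈ chains k ((s.erase m).sup id) := by
  obtain ⟨hsub, hcard, h1, hm⟩ := mem_chains.1 hs
  have hm1 : m ≠ 1 := by
    rintro rfl
    have := card_le_card hsub
    rw [Nat.card_Icc] at this
    omega
  set t := s.erase m
  have ht1 : 1 ∈ t := mem_erase.2 ⟨hm1.symm, h1⟩
  obtain ⟨i, hit, hi⟩ := exists_mem_eq_sup t ⟨1, ht1⟩ id
  have hle : ∀ x ∈ t, x ≤ i := fun x hx => (le_sup (f := id) hx).trans_eq hi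
  have hti : ∀ x ∈ t, x ∈ Icc 1 m ∧ x ≠ m := fun x hx =>
    ⟨hsub (mem_of_mem_erase hx), ne_of_mem_erase hx⟩
  rw [hi, id]
  refine ⟨mem_Ico.2 ⟨hle 1 ht1, ?_⟩, mem_chains.2 ⟨fun x hx => ?_, ?_, ht1, hit⟩⟩
  · have := hti i hit; rw [mem_Icc] at this; omega
  · exact mem_Icc.2 ⟨(mem_Icc.1 (hti x hx).1).1, hle x hx⟩
  · rw [card_erase_of_mem hm, hcard, Nat.add_sub_cancel]

theorem gapProd_sort_insert_of_mem_chains (hk : 1 ≤ k) (ht : t ∈ chains k i) (him : i < m) :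
    gapProd ((insert m t).sort (· ≤ ·)) = gapProd (t.sort (· ≤ ·)) * (m - i) := by
  have hne : t.sort (· ≤ ·) ≠ [] := by
    rw [← List.length_pos_iff, length_sort, (mem_chains.1 ht).2.1]; exact hk
  rw [sort_insert_of_forall_lt fun x hx => (le_of_mem_chains ht hx).trans_lt him,
    gapProd_append_singleton hne, getLast_sort]
  congr 2
  exact le_antisymm (max'_le _ _ _ fun x hx => le_of_mem_chains ht hx)
    (le_max' _ _ (mem_chains.1 ht).2.2.2)

theorem chainGapSum_succ (hk : 1 ≤ k) (m : ℕ) :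
    chainGapSum (k + 1) m = ∑ i ∈ Ico 1 m, chainGapSum k i * (m - i) := by
  simp only [chainGapSum, sum_mul]
  rw [sum_sigma']
  refine (sum_nbij' (fun p => insert m p.2) (fun s => ⟨(s.erase m).sup id, s.erase m⟩)
    ?_ ?_ ?_ ?_ ?_).symm
  · rintro ⟨i, t⟩ hp
    obtain ⟨hi, ht⟩ := mem_sigma.1 hp
    exact insert_mem_chains ht (mem_Ico.1 hi).2
  · intro s hs
    exact mem_sigma.2 (erase_mem_chains hk hs)
  · rintro ⟨i, t⟩ hp
    obtain ⟨hi, ht⟩ := mem_sigma.1 hp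
    have hmt : m ∉ t := fun h => (mem_Ico.1 hi).2.not_ge (le_of_mem_chains ht h)
    simp only [erase_insert hmt, sup_id_eq_of_mem_chains ht]
  · intro s hs
    exact insert_erase (mem_chains.1 hs).2.2.2
  · rintro ⟨i, t⟩ hp
    obtain ⟨hi, ht⟩ := mem_sigma.1 hp
    exact (gapProd_sort_insert_of_mem_chains hk ht (mem_Ico.1 hi).2).symm

end Chains

theorem Nat.sum_range_choose_mul_sub (a n : ℕ) :
    ∑ j ∈ range n, j.choose a * (n - j) = (n + 1).choose (a + 2) := by
  induction n with
  | zero => exact (Nat.choose_eq_zero_of_lt (by omega)).symm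
  | succ n ih =>
    have hockey : ∑ j ∈ range (n + 1), j.choose a = (n + 1).choose (a + 1) := by
      rw [← Nat.sum_Icc_choose]
      refine (sum_subset (fun j hj => ?_) fun j hj hj' => ?_).symm
      · exact mem_range.2 (Nat.lt_succ_of_le (mem_Icc.1 hj).2)
      · rw [mem_range, mem_Icc] at *
        exact Nat.choose_eq_zero_of_lt (by omega)
    have hsplit : ∀ j ∈ range n, j.choose a * (n + 1 - j) = j.choose a * (n - j) + j.choose a :=
      fun j hj => by rw [Nat.sub_add_comm (mem_range.1 hj).le, Nat.mul_succ]
    rw [sum_range_succ, sum_congr rfl hsplit, sum_add_distrib, ih, Nat.add_sub_cancel_left,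
      mul_one, add_assoc, ← sum_range_succ, hockey, Nat.choose_succ_succ' (n + 1) (a + 1),
      add_comm]

theorem Nat.sum_range_add_choose_mul_sub {a c : ℕ} (hca : c ≤ a) (n : ℕ) :
    ∑ j ∈ range n, (j + c).choose a * (n - j) = (n + c + 1).choose (a + 2) := by
  have h := Nat.sum_range_choose_mul_sub a (c + n)
  rw [sum_range_add, sum_eq_zero fun j hj => by
    rw [Nat.choose_eq_zero_of_lt ((mem_range.1 hj).trans_le hca), zero_mul], zero_add] at h
  rw [add_comm n c, ← h]
  exact sum_congr rfl fun j _ => by rw [add_comm j c, Nat.add_sub_add_left]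

theorem chainGapSum_one (m : ℕ) : chainGapSum 1 m = if m = 1 then 1 else 0 := by
  have : chains 1 m = if m = 1 then {{1}} else ∅ := by
    ext s
    simp only [mem_chains, card_eq_one]
    split_ifs with h <;> aesop
  rw [chainGapSum, this]
  split_ifs <;> simp [gapProd]

theorem chainGapSum_add_two (c m : ℕ) :
    chainGapSum (c + 2) m = (m + c - 1).choose (2 * c + 1) := by
  induction c generalizing m with
  | zero =>
    rw [chainGapSum_succ le_rfl]
    simp only [chainGapSum_one, ite_mul, one_mul, zero_mul, sum_ite_eq', mem_Ico,
      add_zero, mul_zero, zero_add, Nat.choose_one_right]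
    split_ifs <;> omega
  | succ c ih =>
    rw [chainGapSum_succ (by omega)]
    rcases m with _ | n
    · exact (Nat.choose_eq_zero_of_lt (by omega)).symm
    rw [sum_Ico_eq_sum_range, Nat.add_sub_cancel, show n + 1 + (c + 1) - 1 = n + c + 1 by omega,
      show 2 * (c + 1) + 1 = 2 * c + 1 + 2 by ring,
      ← Nat.sum_range_add_choose_mul_sub (by omega : c ≤ 2 * c + 1)]
    refine sum_congr rfl fun j _ => ?_
    rw [ih, show 1 + j + c - 1 = j + c by omega, show n + 1 - (1 + j) = n - j by omega]

theorem sum_prod_diff_both_closed_general (k m : ℕ) (hk : 2 ≤ k) :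
    ∑ s ∈ ((Finset.Icc 1 m).powersetCard k).filter (fun s => 1 ∈ s ∧ m ∈ s),
      ∏ j ∈ Finset.range (k - 1),
        ((s.sort (· ≤ ·)).getD (j + 1) 0 - (s.sort (· ≤ ·)).getD j 0) =
      Nat.choose (m + k - 3) (2 * k - 3) := by
  obtain ⟨c, rfl⟩ := Nat.exists_eq_add_of_le' hk
  rw [show m + (c + 2) - 3 = m + c - 1 by omega, show 2 * (c + 2) - 3 = 2 * c + 1 by omega,
    ← chainGapSum_add_two]
  refine sum_congr rfl fun s hs => ?_
  rw [gapProd, length_sort, (mem_chains.1 hs).2.1]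

/-- For `k ≥ 2`, `m ≥ 2`, the sum over all strictly increasing sequences
`1 = i₁ < i₂ < ⋯ < i_k = m` of `∏_{j=1}^{k-1} (i_{j+1} - i_j)` equals `C(m+k-3, 2k-3)`.
The sum ranges over `k`-element subsets of `{1, …, m}` containing both `1` and `m`. -/
theorem sum_prod_diff_both_closed (k m : ℕ) (hk : 2 ≤ k) (hm : 2 ≤ m) :
    ∑ s ∈ ((Finset.Icc 1 m).powersetCard k).filter (fun s => 1 ∈ s ∧ m ∈ s),
      ∏ j ∈ Finset.range (k - 1),
        ((s.sort (· ≤ ·)).getD (j + 1) 0 - (s.sort (· ≤ ·)).getD j 0) =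
      Nat.choose (m + k - 3) (2 * k - 3) :=
  sum_prod_diff_both_closed_general k m hk
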